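/- Let F be a σ-fact, Σ a GC² theory over the arity-≤2 relations, Δ a set of existential rules over σ, and q a Boolean conjunctive query over σ, and let Θ be the conjunction of the existential closure of SHR(F), Σ, SHR(Δ), Wellformed(σs), and ¬SHR(q). If Θ has a model (a σs-interpretation satisfying it), then Θ has a redundancy-free model. -/

import Mathlib

/-- A relational signature: relation names with arities. -/
structure Sig : Type 1 where
  Rel : Type
  ar : Rel → ℕ

/-- An interpretation of a signature: a domain and, for each relation,
a set of tuples (lists of the right length). -/
structure Interp (σ : Sig) : Type 1 where
  Dom : Type
  rel : σ.Rel → Set (List Dom)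
  wf : ∀ R l, l ∈ rel R → l.length = σ.ar R

/-- An atom over variables `V`. -/
structure Atom (σ : Sig) (V : Type) where
  R : σ.Rel
  args : Fin (σ.ar R) → V

/-- A conjunction of atoms over variables `V`. -/
abbrev Conj (σ : Sig) (V : Type) := List (Atom σ V)

def Atom.vmap {σ : Sig} {V W : Type} (f : V → W) (A : Atom σ V) : Atom σ W :=
  ⟨A.R, f ∘ A.args⟩

def Conj.vmap {σ : Sig} {V W : Type} (f : V → W) (Φ : Conj σ V) : Conj σ W :=
  Φ.map (Atom.vmap f)

def satAtom {σ : Sig} (I : Interp σ) {V : Type} (ν : V → I.Dom) (A : Atom σ V) : Prop :=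
  (List.ofFn fun i => ν (A.args i)) ∈ I.rel A.R

def satConj {σ : Sig} (I : Interp σ) {V : Type} (ν : V → I.Dom) (Φ : Conj σ V) : Prop :=
  ∀ A ∈ Φ, satAtom I ν A

/-- A variable occurs in an atom. -/
def occursIn {σ : Sig} {V : Type} (v : V) (A : Atom σ V) : Prop := ∃ i, A.args i = v

/-- The Gaifman graph of a conjunction of atoms. -/
def gaifmanC {σ : Sig} {V : Type} (Φ : Conj σ V) : SimpleGraph V where
  Adj u v := u ≠ v ∧ ∃ A ∈ Φ, occursIn u A ∧ occursIn v A
  symm := by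
    constructor
    intro u v h
    exact ⟨h.1.symm, by obtain ⟨A, hA, h1, h2⟩ := h.2; exact ⟨A, hA, h2, h1⟩⟩
  loopless := by constructor; intro v h; exact h.1 rfl

/-- The Gaifman graph of an interpretation. -/
def gaifmanI {σ : Sig} (I : Interp σ) : SimpleGraph I.Dom where
  Adj a b := a ≠ b ∧ ∃ R l, l ∈ I.rel R ∧ a ∈ l ∧ b ∈ l
  symm := by
    constructor
    intro a b h
    exact ⟨h.1.symm, by obtain ⟨R, l, hl, h1, h2⟩ := h.2; exact ⟨R, l, hl, h2, h1⟩⟩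
  loopless := by constructor; intro a h; exact h.1 rfl

/-- The relation names of the shredded signature. -/
inductive SRel (σ : Sig) : Type
  | low (R : σ.Rel) (h : σ.ar R ≤ 2)
  | elt
  | tag (R : σ.Rel) (h : 2 < σ.ar R)
  | proj (R : σ.Rel) (h : 2 < σ.ar R) (i : Fin (σ.ar R))

/-- The shredded signature σs. -/
def sSig (σ : Sig) : Sig where
  Rel := SRel σ
  ar := fun r => match r with
    | .low R _ => σ.ar R
    | .elt => 1
    | .tag _ _ => 1
    | .proj _ _ _ => 2

/-- Shredding of an atom (with the fresh tuple variable `t`). -/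
def shredAtom {σ : Sig} {V T : Type} (A : Atom σ V) (t : T) : Conj (sSig σ) (V ⊕ T) :=
  if h : σ.ar A.R ≤ 2 then
    [⟨SRel.low A.R h, fun i => Sum.inl (A.args i)⟩]
  else
    ⟨SRel.tag A.R (lt_of_not_ge h), fun _ => Sum.inr t⟩ ::
    (List.finRange (σ.ar A.R)).map (fun i =>
      ⟨SRel.proj A.R (lt_of_not_ge h) i,
       fun j => if j.val = 0 then Sum.inr t else Sum.inl (A.args i)⟩)

/-- Shredding of a conjunction of atoms: one fresh variable per atom. -/
def shredConj {σ : Sig} {V : Type} (Φ : Conj σ V) : Conj (sSig σ) (V ⊕ Fin Φ.length) :=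
  (List.finRange Φ.length).flatMap (fun k => shredAtom (Φ.get k) k)

/-- The fresh elements of the shredding of an interpretation: one per higher-arity tuple. -/
def HighTuple {σ : Sig} (I : Interp σ) : Type :=
  Σ R : σ.Rel, {l : List I.Dom // l ∈ I.rel R ∧ 2 < σ.ar R}

/-- The shredding of an interpretation. -/
def shredInterp {σ : Sig} (I : Interp σ) : Interp (sSig σ) where
  Dom := I.Dom ⊕ HighTuple I
  rel := fun r => match r with
    | .low R _ => {l | ∃ l₀ ∈ I.rel R, l = l₀.map Sum.inl}
    | .elt => {l | ∃ a : I.Dom, l = [Sum.inl a]}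
    | .tag R _ => {l | ∃ t : HighTuple I, t.1 = R ∧ l = [Sum.inr t]}
    | .proj R _ i => {l | ∃ t : HighTuple I, t.1 = R ∧
        ∃ a : I.Dom, t.2.val[i.val]? = some a ∧ l = [Sum.inr t, Sum.inl a]}
  wf := by
    rintro r l hl
    cases r with
    | low R h => obtain ⟨l₀, h₀, rfl⟩ := hl; simpa [sSig] using I.wf R l₀ h₀
    | elt => obtain ⟨a, rfl⟩ := hl; rfl
    | tag R h => obtain ⟨t, _, rfl⟩ := hl; rfl
    | proj R h i => obtain ⟨t, _, a, _, rfl⟩ := hl; rfl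

/-- Homomorphisms of interpretations. -/
def IsHom {σ : Sig} (I I' : Interp σ) (h : I.Dom → I'.Dom) : Prop :=
  ∀ R l, l ∈ I.rel R → l.map h ∈ I'.rel R

/-- Existential rules: body over variables `B`, head over `B ⊕ E`
(`B`-variables occurring in the head are the frontier). -/
structure ExRule (σ : Sig) : Type 1 where
  B : Type
  E : Type
  body : Conj σ B
  head : Conj σ (B ⊕ E)

def satRule {σ : Sig} (I : Interp σ) (τ : ExRule σ) : Prop :=
  ∀ ν : τ.B → I.Dom, satConj I ν τ.body →
    ∃ μ : τ.E → I.Dom, satConj I (Sum.elim ν μ) τ.head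

/-- Shredding of an existential rule. -/
def shredRule {σ : Sig} (τ : ExRule σ) : ExRule (sSig σ) where
  B := τ.B ⊕ Fin τ.body.length
  E := τ.E ⊕ Fin τ.head.length
  body := shredConj τ.body
  head := (shredConj τ.head).vmap
    (Sum.elim (Sum.elim (Sum.inl ∘ Sum.inl) (Sum.inr ∘ Sum.inl)) (fun k => Sum.inr (Sum.inr k)))

/-- The `Elt`-elements of a σs-interpretation. -/
def EltDom {σ : Sig} (J : Interp (sSig σ)) : Type :=
  {a : J.Dom // [a] ∈ J.rel SRel.elt}

/-- The unshredding of a σs-interpretation. -/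
def unshred {σ : Sig} (J : Interp (sSig σ)) : Interp σ where
  Dom := EltDom J
  rel := fun R =>
    if h : σ.ar R ≤ 2 then
      {l | l.length = σ.ar R ∧ l.map Subtype.val ∈ J.rel (SRel.low R h)}
    else
      {l | ∃ hl : l.length = σ.ar R, ∃ t : J.Dom,
        [t] ∈ J.rel (SRel.tag R (lt_of_not_ge h)) ∧
        ∀ i : Fin (σ.ar R),
          [t, (l.get (Fin.cast hl.symm i)).val] ∈ J.rel (SRel.proj R (lt_of_not_ge h) i)}
  wf := by
    intro R l hl
    by_cases h : σ.ar R ≤ 2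
    · rw [dif_pos h] at hl; exact hl.1
    · rw [dif_neg h] at hl; exact hl.1

/-- The structural conditions satisfied by shreddings (`Wellformed(σs)`). -/
def WellFormed {σ : Sig} (J : Interp (sSig σ)) : Prop :=
  (∀ (R : σ.Rel) (h : 2 < σ.ar R) (a : J.Dom),
      [a] ∈ J.rel (SRel.tag R h) → [a] ∉ J.rel SRel.elt) ∧
  (∀ (R : σ.Rel) (h : 2 < σ.ar R) (R' : σ.Rel) (h' : 2 < σ.ar R') (a : J.Dom),
      [a] ∈ J.rel (SRel.tag R h) → [a] ∈ J.rel (SRel.tag R' h') → R = R') ∧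
  (∀ a : J.Dom, [a] ∈ J.rel SRel.elt ∨ ∃ (R : σ.Rel) (h : 2 < σ.ar R), [a] ∈ J.rel (SRel.tag R h)) ∧
  (∀ (R : σ.Rel) (h : 2 < σ.ar R) (i : Fin (σ.ar R)) (t a : J.Dom),
      [t, a] ∈ J.rel (SRel.proj R h i) →
        [t] ∈ J.rel (SRel.tag R h) ∧ [a] ∈ J.rel SRel.elt) ∧
  (∀ (R : σ.Rel) (h : 2 < σ.ar R) (t : J.Dom), [t] ∈ J.rel (SRel.tag R h) →
      ∀ i : Fin (σ.ar R), ∃! a : J.Dom, [t, a] ∈ J.rel (SRel.proj R h i)) ∧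
  (∀ (R : σ.Rel) (h : σ.ar R ≤ 2) (l : List J.Dom), l ∈ J.rel (SRel.low R h) →
      ∀ a ∈ l, [a] ∈ J.rel SRel.elt)

/-- Redundancy-freeness: no two distinct tuple-elements code the same tuple. -/
def RedundancyFree {σ : Sig} (J : Interp (sSig σ)) : Prop :=
  ∀ (R : σ.Rel) (h : 2 < σ.ar R) (t t' : J.Dom) (f : Fin (σ.ar R) → J.Dom),
    (∀ i, [t, f i] ∈ J.rel (SRel.proj R h i) ∧ [t', f i] ∈ J.rel (SRel.proj R h i)) → t = t'

/-- Isomorphism of interpretations. -/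
structure InterpIso {σ : Sig} (I I' : Interp σ) where
  e : I.Dom ≃ I'.Dom
  hrel : ∀ R l, l ∈ I.rel R ↔ l.map e ∈ I'.rel R

/-- GC²: the guarded two-variable fragment with counting quantifiers
(atoms have arity ≤ 2; guards of counting quantifiers use both variables). -/
inductive GC2 (σ : Sig) : Type
  | atom (R : σ.Rel) (har : σ.ar R ≤ 2) (args : Fin (σ.ar R) → Fin 2)
  | eq (v w : Fin 2)
  | neg (φ : GC2 σ)
  | conj (φ ψ : GC2 σ)
  | count (v : Fin 2) (n : ℕ) (R : σ.Rel) (har : σ.ar R ≤ 2)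
      (gargs : Fin (σ.ar R) → Fin 2) (hg : ∀ w : Fin 2, ∃ i, gargs i = w)
      (φ : GC2 σ)

def GC2.eval {σ : Sig} (I : Interp σ) : GC2 σ → (Fin 2 → I.Dom) → Prop
  | .atom R _ args, ν => (List.ofFn fun i => ν (args i)) ∈ I.rel R
  | .eq v w, ν => ν v = ν w
  | .neg φ, ν => ¬ φ.eval I ν
  | .conj φ ψ, ν => φ.eval I ν ∧ ψ.eval I ν
  | .count v n R _ gargs _ φ, ν =>
      ∃ s : Finset I.Dom, n ≤ s.card ∧ ∀ b ∈ s,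
        ((List.ofFn fun i => Function.update ν v b (gargs i)) ∈ I.rel R) ∧
        φ.eval I (Function.update ν v b)

def GC2.size {σ : Sig} : GC2 σ → ℕ
  | .atom _ _ _ => 1
  | .eq _ _ => 1
  | .neg φ => φ.size + 1
  | .conj φ ψ => φ.size + ψ.size + 1
  | .count _ _ _ _ _ _ φ => φ.size + 1

/-- A GC² theory holds in an interpretation (formulas read universally closed). -/
def satTheory {σ : Sig} (I : Interp σ) (Θ : Set (GC2 σ)) : Prop :=
  ∀ φ ∈ Θ, ∀ ν : Fin 2 → I.Dom, φ.eval I ν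

/-- A GC² formula mentions only the arity-≤2 relations of the original signature σ. -/
def GC2.onlyLow {σ : Sig} : GC2 (sSig σ) → Prop
  | .atom R _ _ => ∃ R₀ h, R = SRel.low R₀ h
  | .eq _ _ => True
  | .neg φ => φ.onlyLow
  | .conj φ ψ => φ.onlyLow ∧ ψ.onlyLow
  | .count _ _ R _ _ _ φ => (∃ R₀ h, R = SRel.low R₀ h) ∧ φ.onlyLow

/-!
Call two elements of a well-formed model `J` redundant copies of each other when neither is
an `Elt`-element and they carry the same `A_R`-tags and the same `R_i`-successors. Picking one
representative per class gives an idempotent endomorphism of `J` fixing every `Elt`-element, so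
the substructure induced on its fixed points is a retract of `J`. A retract keeps the match of
`SHR(F)` and the rules `SHR(Δ)` (frontier values already lie in the retract), and as a
substructure it cannot match `SHR(q)`. The GC² theory survives because its atoms and counting
guards only see `Elt`-elements, all of which are kept. Finally, two tuple-elements coding the
same tuple are redundant copies of each other, so the retract is redundancy-free.
-/

namespace Interp

variable {σ : Sig}

abbrev induce (J : Interp σ) (P : J.Dom → Prop) : Interp σ where
  Dom := {a // P a}
  rel r := {l | l.map Subtype.val ∈ J.rel r}
  wf r l hl := by simpa using J.wf r _ hl

theorem isHom_val_induce (J : Interp σ) (P : J.Dom → Prop) :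
    IsHom (J.induce P) J Subtype.val :=
  fun _ _ hl => hl

end Interp

theorem satConj_comp_of_isHom {σ : Sig} {I I' : Interp σ} {h : I.Dom → I'.Dom}
    (hh : IsHom I I' h) {V : Type} {ν : V → I.Dom} {Φ : Conj σ V} (hΦ : satConj I ν Φ) :
    satConj I' (h ∘ ν) Φ := by
  intro A hA
  have := hh A.R _ (hΦ A hA)
  rwa [List.map_ofFn] at this

section Retract

variable {σ : Sig} {J : Interp σ} {P : J.Dom → Prop} {ρ : J.Dom → J.Dom}

theorem isHom_codRestrict_of_isHom (hρ : IsHom J J ρ) (hρP : ∀ a, P (ρ a)) :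
    IsHom J (J.induce P) (fun a => ⟨ρ a, hρP a⟩) := by
  intro r l hl
  show (l.map _).map Subtype.val ∈ J.rel r
  rw [List.map_map]
  exact hρ r l hl

variable (hρ : IsHom J J ρ) (hρP : ∀ a, P (ρ a)) (hρfix : ∀ a, P a → ρ a = a)
include hρ hρP

theorem exists_satConj_induce_iff {V : Type} (Φ : Conj σ V) :
    (∃ ν, satConj (J.induce P) ν Φ) ↔ ∃ ν, satConj J ν Φ :=
  ⟨fun ⟨_, h⟩ => ⟨_, satConj_comp_of_isHom (J.isHom_val_induce P) h⟩,
    fun ⟨_, h⟩ => ⟨_, satConj_comp_of_isHom (isHom_codRestrict_of_isHom hρ hρP) h⟩⟩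

include hρfix in
theorem satRule_induce {τ : ExRule σ} (hτ : satRule J τ) : satRule (J.induce P) τ := by
  intro ν hν
  obtain ⟨μ, hμ⟩ := hτ _ (satConj_comp_of_isHom (J.isHom_val_induce P) hν)
  refine ⟨(fun a => ⟨ρ a, hρP a⟩) ∘ μ, ?_⟩
  have hfrontier : Sum.elim ν ((fun a => ⟨ρ a, hρP a⟩) ∘ μ)
      = (fun a => (⟨ρ a, hρP a⟩ : {a // P a})) ∘ Sum.elim (Subtype.val ∘ ν) μ := by
    funext x
    cases x with
    | inl b => exact Subtype.ext (hρfix _ (ν b).2).symm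
    | inr e => rfl
  rw [hfrontier]
  exact satConj_comp_of_isHom (isHom_codRestrict_of_isHom hρ hρP) hμ

end Retract

section Guarded

variable {σ : Sig} {J : Interp (sSig σ)} {P : J.Dom → Prop}

theorem GC2.eval_induce_iff (hP : ∀ R h l, l ∈ J.rel (SRel.low R h) → ∀ a ∈ l, P a)
    (φ : GC2 (sSig σ)) (hφ : φ.onlyLow) (ν : Fin 2 → (J.induce P).Dom) :
    φ.eval (J.induce P) ν ↔ φ.eval J (Subtype.val ∘ ν) := by
  induction φ generalizing ν with
  | atom R _ args =>
    show (List.ofFn _).map Subtype.val ∈ J.rel R ↔ _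
    rw [List.map_ofFn]
    rfl
  | eq v w => exact Subtype.ext_iff
  | neg φ ih => exact not_congr (ih hφ ν)
  | conj φ ψ ihφ ihψ => exact and_congr (ihφ hφ.1 ν) (ihψ hφ.2 ν)
  | count v n R _ gargs hg φ ih =>
    obtain ⟨⟨R₀, h₀, rfl⟩, hφ⟩ := hφ
    have hguard : ∀ b : (J.induce P).Dom,
        (List.ofFn fun i => Function.update ν v b (gargs i))
            ∈ (J.induce P).rel (SRel.low R₀ h₀) ↔
          (List.ofFn fun i => Function.update (Subtype.val ∘ ν) v b.1 (gargs i))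
            ∈ J.rel (SRel.low R₀ h₀) := by
      intro b
      show (List.ofFn _).map Subtype.val ∈ J.rel (SRel.low R₀ h₀) ↔ _
      rw [List.map_ofFn, ← Function.comp_update]
      rfl
    have hbody : ∀ b : (J.induce P).Dom, φ.eval (J.induce P) (Function.update ν v b) ↔
        φ.eval J (Function.update (Subtype.val ∘ ν) v b.1) := by
      intro b
      rw [ih hφ, Function.comp_update]
    classical
    constructor
    · rintro ⟨s, hn, hs⟩
      refine ⟨s.map (Function.Embedding.subtype P), by rwa [Finset.card_map], ?_⟩
      simp only [Finset.mem_map, Function.Embedding.coe_subtype]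
      rintro _ ⟨b, hb, rfl⟩
      exact ⟨(hguard b).1 (hs b hb).1, (hbody b).1 (hs b hb).2⟩
    · rintro ⟨s, hn, hs⟩
      -- the guard mentions the counted variable, so every counted element lies in `P`
      have hsP : ∀ b ∈ s, P b := by
        intro b hb
        obtain ⟨i, hi⟩ := hg v
        refine hP R₀ h₀ _ (hs b hb).1 b ((List.mem_ofFn' _ _).2 ⟨i, ?_⟩)
        simp [hi]
      refine ⟨s.subtype P, ?_, ?_⟩
      · rwa [Finset.card_subtype, Finset.filter_true_of_mem hsP]
      · intro b hb
        have hb' := Finset.mem_subtype.1 hb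
        exact ⟨(hguard b).2 (hs _ hb').1, (hbody b).2 (hs _ hb').2⟩

theorem satTheory_induce (hP : ∀ R h l, l ∈ J.rel (SRel.low R h) → ∀ a ∈ l, P a)
    {Th : Set (GC2 (sSig σ))} (hTh : ∀ φ ∈ Th, φ.onlyLow) (hJ : satTheory J Th) :
    satTheory (J.induce P) Th :=
  fun φ hφ ν => (GC2.eval_induce_iff hP φ (hTh φ hφ) ν).2 (hJ φ hφ _)

end Guarded

namespace WellFormed

variable {σ : Sig} {J : Interp (sSig σ)}

theorem induce (hW : WellFormed J) {P : J.Dom → Prop}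
    (hP : ∀ a, [a] ∈ J.rel SRel.elt → P a) : WellFormed (J.induce P) := by
  obtain ⟨hdisj, htag, hcover, hproj, huniq, hlow⟩ := hW
  refine ⟨fun R h a => hdisj R h a, fun R h R' h' a => htag R h R' h' a, fun a => hcover a,
    fun R h i t a => hproj R h i t a, ?_,
    fun R h l hl a ha => hlow R h _ hl a (List.mem_map_of_mem ha)⟩
  intro R h t ht i
  obtain ⟨a, ha, ha_unique⟩ := huniq R h t ht i
  exact ⟨⟨a, hP a (hproj R h i t a ha).2⟩, ha, fun b hb => Subtype.ext (ha_unique b hb)⟩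

theorem not_elt_of_tag (hW : WellFormed J) {R : σ.Rel} {h : 2 < σ.ar R} {t : J.Dom}
    (ht : [t] ∈ J.rel (SRel.tag R h)) : [t] ∉ J.rel SRel.elt :=
  hW.1 R h t ht

theorem tag_eq (hW : WellFormed J) {R R' : σ.Rel} {h : 2 < σ.ar R} {h' : 2 < σ.ar R'}
    {t : J.Dom} (ht : [t] ∈ J.rel (SRel.tag R h)) (ht' : [t] ∈ J.rel (SRel.tag R' h')) :
    R = R' :=
  hW.2.1 R h R' h' t ht ht'

theorem tag_of_proj (hW : WellFormed J) {R : σ.Rel} {h : 2 < σ.ar R} {i : Fin (σ.ar R)}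
    {t a : J.Dom} (hta : [t, a] ∈ J.rel (SRel.proj R h i)) : [t] ∈ J.rel (SRel.tag R h) :=
  (hW.2.2.2.1 R h i t a hta).1

theorem elt_of_proj (hW : WellFormed J) {R : σ.Rel} {h : 2 < σ.ar R} {i : Fin (σ.ar R)}
    {t a : J.Dom} (hta : [t, a] ∈ J.rel (SRel.proj R h i)) : [a] ∈ J.rel SRel.elt :=
  (hW.2.2.2.1 R h i t a hta).2

theorem proj_unique (hW : WellFormed J) {R : σ.Rel} {h : 2 < σ.ar R} {i : Fin (σ.ar R)}
    {t a b : J.Dom} (ha : [t, a] ∈ J.rel (SRel.proj R h i))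
    (hb : [t, b] ∈ J.rel (SRel.proj R h i)) : a = b :=
  (hW.2.2.2.2.1 R h t (hW.tag_of_proj ha) i).unique ha hb

theorem elt_of_mem_low (hW : WellFormed J) {R : σ.Rel} {h : σ.ar R ≤ 2} {l : List J.Dom}
    (hl : l ∈ J.rel (SRel.low R h)) {a : J.Dom} (ha : a ∈ l) : [a] ∈ J.rel SRel.elt :=
  hW.2.2.2.2.2 R h l hl a ha

section Codes

variable (hW : WellFormed J) {R : σ.Rel} {h : 2 < σ.ar R} {t t' : J.Dom}
  {f : Fin (σ.ar R) → J.Dom}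
  (hf : ∀ i, [t, f i] ∈ J.rel (SRel.proj R h i) ∧ [t', f i] ∈ J.rel (SRel.proj R h i))
include hW hf

theorem tag_of_codes {R' : σ.Rel} {h' : 2 < σ.ar R'} (ht : [t] ∈ J.rel (SRel.tag R' h')) :
    [t'] ∈ J.rel (SRel.tag R' h') := by
  have i₀ : Fin (σ.ar R) := ⟨0, by omega⟩
  obtain rfl : R' = R := hW.tag_eq ht (hW.tag_of_proj (hf i₀).1)
  exact hW.tag_of_proj (hf i₀).2

theorem proj_of_codes {R' : σ.Rel} {h' : 2 < σ.ar R'} {i' : Fin (σ.ar R')} {a : J.Dom}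
    (ha : [t, a] ∈ J.rel (SRel.proj R' h' i')) : [t', a] ∈ J.rel (SRel.proj R' h' i') := by
  have i₀ : Fin (σ.ar R) := ⟨0, by omega⟩
  obtain rfl : R' = R := hW.tag_eq (hW.tag_of_proj ha) (hW.tag_of_proj (hf i₀).1)
  obtain rfl : a = f i' := hW.proj_unique ha (hf i').1
  exact (hf i').2

end Codes

end WellFormed

section TupleRep

variable {σ : Sig} (J : Interp (sSig σ))

open Classical in
noncomputable def tupleKey (t : J.Dom) :
    J.Dom ⊕ ((∀ R : σ.Rel, 2 < σ.ar R → Prop) ×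
      (∀ R : σ.Rel, (h : 2 < σ.ar R) → Fin (σ.ar R) → J.Dom → Prop)) :=
  if [t] ∈ J.rel SRel.elt then .inl t
  else .inr (fun R h => [t] ∈ J.rel (SRel.tag R h),
    fun R h i a => [t, a] ∈ J.rel (SRel.proj R h i))

noncomputable def tupleRep (t : J.Dom) : J.Dom :=
  haveI : Nonempty J.Dom := ⟨t⟩
  Function.invFun (tupleKey J) (tupleKey J t)

variable {J}

theorem tupleKey_tupleRep (t : J.Dom) : tupleKey J (tupleRep J t) = tupleKey J t :=
  haveI : Nonempty J.Dom := ⟨t⟩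
  Function.invFun_eq ⟨t, rfl⟩

theorem tupleRep_eq_of_tupleKey_eq {t t' : J.Dom} (h : tupleKey J t = tupleKey J t') :
    tupleRep J t = tupleRep J t' := by
  unfold tupleRep
  rw [h]

theorem tupleRep_tupleRep (t : J.Dom) : tupleRep J (tupleRep J t) = tupleRep J t :=
  tupleRep_eq_of_tupleKey_eq (tupleKey_tupleRep t)

theorem tupleRep_of_elt {t : J.Dom} (ht : [t] ∈ J.rel SRel.elt) : tupleRep J t = t := by
  have hkey := tupleKey_tupleRep t
  unfold tupleKey at hkey
  rw [if_pos ht] at hkey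
  split_ifs at hkey
  exact Sum.inl.inj hkey

theorem tupleRep_of_not_elt {t : J.Dom} (ht : [t] ∉ J.rel SRel.elt) :
    (∀ R h, [tupleRep J t] ∈ J.rel (SRel.tag R h) ↔ [t] ∈ J.rel (SRel.tag R h)) ∧
      ∀ R h i a,
        [tupleRep J t, a] ∈ J.rel (SRel.proj R h i) ↔ [t, a] ∈ J.rel (SRel.proj R h i) := by
  have hkey := tupleKey_tupleRep t
  unfold tupleKey at hkey
  rw [if_neg ht] at hkey
  split_ifs at hkey
  obtain ⟨htag, hproj⟩ := Prod.ext_iff.1 (Sum.inr.inj hkey)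
  exact ⟨fun R h => Iff.of_eq (congrFun₂ htag R h),
    fun R h i a => Iff.of_eq (congrFun₂ (congrFun₂ hproj R h) i a)⟩

theorem WellFormed.isHom_tupleRep (hW : WellFormed J) : IsHom J J (tupleRep J) := by
  intro r l hl
  have hlen := J.wf r l hl
  cases r with
  | low R h =>
    rwa [List.map_congr_left fun a ha => tupleRep_of_elt (hW.elt_of_mem_low hl ha),
      List.map_id']
  | elt =>
    obtain ⟨a, rfl⟩ := List.length_eq_one_iff.1 hlen
    simpa [tupleRep_of_elt hl] using hl
  | tag R h =>
    obtain ⟨t, rfl⟩ := List.length_eq_one_iff.1 hlen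
    simpa using (tupleRep_of_not_elt (hW.not_elt_of_tag hl)).1 R h |>.2 hl
  | proj R h i =>
    obtain ⟨t, a, rfl⟩ := List.length_eq_two.1 hlen
    simpa [tupleRep_of_elt (hW.elt_of_proj hl)] using
      (tupleRep_of_not_elt (hW.not_elt_of_tag (hW.tag_of_proj hl))).2 R h i a |>.2 hl

theorem WellFormed.tupleKey_eq_of_codes (hW : WellFormed J) {R : σ.Rel} {h : 2 < σ.ar R}
    {t t' : J.Dom} {f : Fin (σ.ar R) → J.Dom}
    (hf : ∀ i, [t, f i] ∈ J.rel (SRel.proj R h i) ∧ [t', f i] ∈ J.rel (SRel.proj R h i)) :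
    tupleKey J t = tupleKey J t' := by
  have i₀ : Fin (σ.ar R) := ⟨0, by omega⟩
  have hf' i := (hf i).symm
  unfold tupleKey
  rw [if_neg (hW.not_elt_of_tag (hW.tag_of_proj (hf i₀).1)),
    if_neg (hW.not_elt_of_tag (hW.tag_of_proj (hf i₀).2))]
  congr 1
  refine Prod.ext ?_ ?_
  · funext R' h'
    exact propext ⟨hW.tag_of_codes hf, hW.tag_of_codes hf'⟩
  · funext R' h' i a
    exact propext ⟨hW.proj_of_codes hf, hW.proj_of_codes hf'⟩

theorem WellFormed.redundancyFree_induce_tupleRep (hW : WellFormed J) :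
    RedundancyFree (J.induce fun t => tupleRep J t = t) := by
  intro R h t t' f hf
  apply Subtype.ext
  rw [← t.2, ← t'.2]
  exact tupleRep_eq_of_tupleKey_eq (hW.tupleKey_eq_of_codes hf)

end TupleRep

/-- if `Θ` (the conjunction of the existential closure of `SHR(F)`,
a GC² theory `Th` over the arity-≤2 relations, `SHR(Δ)`, `Wellformed(σs)` and
`¬SHR(q)`) has a model, then it has a redundancy-free model. -/
theorem redundancy_free_model (σ : Sig) {nF nq : ℕ} (F : Conj σ (Fin nF))
    (q : Conj σ (Fin nq)) (Th : Set (GC2 (sSig σ))) (hTh : ∀ φ ∈ Th, GC2.onlyLow φ)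
    (Δ : Set (ExRule σ)) :
    (∃ J : Interp (sSig σ),
      (∃ ν, satConj J ν (shredConj F)) ∧ satTheory J Th ∧
      (∀ τ ∈ Δ, satRule J (shredRule τ)) ∧ WellFormed J ∧
      ¬ (∃ ν, satConj J ν (shredConj q))) →
    ∃ J : Interp (sSig σ),
      ((∃ ν, satConj J ν (shredConj F)) ∧ satTheory J Th ∧
        (∀ τ ∈ Δ, satRule J (shredRule τ)) ∧ WellFormed J ∧
        ¬ (∃ ν, satConj J ν (shredConj q))) ∧
      RedundancyFree J := by
  rintro ⟨J, hF, hThJ, hΔ, hW, hq⟩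
  have hρ := hW.isHom_tupleRep
  have hlow : ∀ R h l, l ∈ J.rel (SRel.low R h) → ∀ a ∈ l, tupleRep J a = a :=
    fun _ _ _ hl _ ha => tupleRep_of_elt (hW.elt_of_mem_low hl ha)
  refine ⟨J.induce fun t => tupleRep J t = t, ⟨?_, satTheory_induce hlow hTh hThJ,
      fun τ hτ => satRule_induce hρ tupleRep_tupleRep (fun _ ha => ha) (hΔ τ hτ),
      hW.induce fun _ => tupleRep_of_elt, ?_⟩, hW.redundancyFree_induce_tupleRep⟩
  · exact (exists_satConj_induce_iff hρ tupleRep_tupleRep _).2 hF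
  · rwa [exists_satConj_induce_iff hρ tupleRep_tupleRep]
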